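/- arXiv:2206.10287 — 5 statements merged into one kernel-verified Lean document; each statement's English description precedes it below -/
import Mathlib

section
/- For every real d > 0 there exists M > max(d, 1) such that for all real m ≥ M the stationary distribution ρ satisfies ∑_{k ∈ ℕ, k > C1(m)·log(2)·m/d + (3/2)·log(m)²} ρ(k) ≤ m^{−9}. -/
open Real

/-- Transition probabilities on the nonnegative integers:
`p(0,1) = 1`, `p(k,k+1) = (1 - d/m)^k` and `p(k,k-1) = 1 - (1 - d/m)^k` for `k ≥ 1`,
and `p(k,l) = 0` otherwise. -/
noncomputable def ptrans (d m : ℝ) (k l : ℕ) : ℝ :=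
  if k = 0 ∧ l = 1 then 1
  else if 1 ≤ k ∧ l = k + 1 then (1 - d / m) ^ k
  else if 1 ≤ k ∧ l + 1 = k then 1 - (1 - d / m) ^ k
  else 0

/-- `ρ̃(0) = 1` and `ρ̃(k) = ∏_{i=0}^{k-1} p(i,i+1)/p(i+1,i)` for `k ≥ 1`. -/
noncomputable def rhoTilde (d m : ℝ) (k : ℕ) : ℝ :=
  ∏ i ∈ Finset.range k, ptrans d m i (i + 1) / ptrans d m (i + 1) i

/-- The stationary distribution `ρ(k) = ρ̃(k) / ∑_{j} ρ̃(j)`. -/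
noncomputable def rhoStat (d m : ℝ) (k : ℕ) : ℝ :=
  rhoTilde d m k / ∑' j, rhoTilde d m j

/-- `C1(m) = 1 + 10 / (log 2 · log m)`. -/
noncomputable def C1 (m : ℝ) : ℝ := 1 + 10 / (Real.log 2 * Real.log m)

lemma rhoTilde_eq (d m : ℝ) (k : ℕ) :
    rhoTilde d m k = ∏ i ∈ Finset.range k, (1 - d/m)^i / (1 - (1 - d/m)^(i+1)) := by
  unfold rhoTilde
  refine Finset.prod_congr rfl fun i _ => ?_
  rcases Nat.eq_zero_or_pos i with h | h
  · subst h; simp [ptrans]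
  · have h1 : ¬ (i = 0 ∧ i + 1 = 1) := by omega
    have h2 : 1 ≤ i ∧ i + 1 = i + 1 := ⟨h, rfl⟩
    have h3 : ¬ (i + 1 = 0 ∧ i = 1) := by omega
    have h4 : ¬ (1 ≤ i + 1 ∧ i = i + 1 + 1) := by omega
    have h5 : 1 ≤ i + 1 ∧ i + 1 = i + 1 := ⟨by omega, rfl⟩
    have h6 : i ≠ 0 := by omega
    have h7 : ¬ (i = i + 1 + 1) := by omega
    simp [ptrans, h1, h2, h3, h4, h5, h6, h7]

lemma rhoTilde_pos' {d m : ℝ} (h0 : 0 < d / m) (h1 : d / m < 1) (k : ℕ) :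
    0 < rhoTilde d m k := by
  rw [rhoTilde_eq]
  refine Finset.prod_pos fun i _ => div_pos (pow_pos (by linarith) i) ?_
  have : (1 - d/m) ^ (i+1) < 1 := pow_lt_one₀ (by linarith) (by linarith) (Nat.succ_ne_zero i)
  linarith

lemma rhoTilde_succ' (d m : ℝ) (k : ℕ) :
    rhoTilde d m (k+1) = rhoTilde d m k * ((1 - d/m)^k / (1 - (1 - d/m)^(k+1))) := by
  rw [rhoTilde_eq, rhoTilde_eq, Finset.prod_range_succ]

lemma rhoTilde_summable' {d m : ℝ} (h0 : 0 < d / m) (h1 : d / m < 1) :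
    Summable (rhoTilde d m) := by
  set q := 1 - d/m with hq
  have hq0 : 0 ≤ q := by simp [hq]; linarith
  have hq1 : q < 1 := by simp [hq]; linarith
  apply summable_of_ratio_norm_eventually_le (r := 1/2) (by norm_num)
  have ht : Filter.Tendsto (fun k : ℕ => q ^ k) Filter.atTop (nhds 0) :=
    tendsto_pow_atTop_nhds_zero_of_lt_one hq0 hq1
  filter_upwards [ht.eventually_le_const (by norm_num : (0:ℝ) < 1/3)] with k hk
  have hpos := rhoTilde_pos' h0 h1
  have hqk1 : q ^ (k+1) ≤ 1/3 := by
    calc q ^ (k+1) = q ^ k * q := pow_succ q k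
    _ ≤ q ^ k * 1 := mul_le_mul_of_nonneg_left (by linarith) (pow_nonneg hq0 k)
    _ ≤ 1/3 := by rw [mul_one]; exact hk
  have hden : (2:ℝ)/3 ≤ 1 - q ^ (k+1) := by linarith
  have hratio : q ^ k / (1 - q ^ (k+1)) ≤ 1/2 := by
    calc q ^ k / (1 - q ^ (k+1)) ≤ (1/3) / (2/3) :=
      div_le_div₀ (by norm_num) hk (by norm_num) hden
    _ = 1/2 := by norm_num
  rw [Real.norm_eq_abs, Real.norm_eq_abs, abs_of_pos (hpos (k+1)), abs_of_pos (hpos k),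
    rhoTilde_succ']
  rw [mul_comm (1/2 : ℝ)]
  exact mul_le_mul_of_nonneg_left hratio (hpos k).le

lemma sum_range_cast_id (n : ℕ) : ∑ i ∈ Finset.range n, (i:ℝ) = n * (n - 1) / 2 := by
  induction n with
  | zero => simp
  | succ n ih => rw [Finset.sum_range_succ, ih]; push_cast; ring

set_option maxHeartbeats 1000000 in
theorem stmt1 (d : ℝ) (hd : 0 < d) :
    ∃ M : ℝ, M > max d 1 ∧ ∀ m : ℝ, M ≤ m →
      (∑' k : ℕ, if C1 m * Real.log 2 * m / d + (3 / 2) * (Real.log m) ^ 2 < (k : ℝ)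
        then rhoStat d m k else 0) ≤ m ^ (-9 : ℝ) := by

  refine ⟨(48*d+48)^6, ?_, ?_⟩
  · have h1 : (1:ℝ) ≤ 48*d+48 := by linarith
    have h2 : (48*d+48:ℝ) ≤ (48*d+48)^6 := le_self_pow₀ h1 (by norm_num)
    rw [gt_iff_lt, max_lt_iff]
    exact ⟨by linarith, by linarith⟩
  intro m hm
  -- ### basic numeric facts
  have h48 : ((48:ℝ))^6 ≤ m := le_trans (pow_le_pow_left₀ (by norm_num) (by linarith) 6) hm
  have hm0 : (0:ℝ) < m := by nlinarith
  set L := Real.log m with hLdef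
  have hL10 : 10 ≤ L := by
    rw [hLdef, Real.le_log_iff_exp_le hm0]
    have he : Real.exp 10 = Real.exp 1 ^ 10 := by rw [Real.exp_one_pow]; norm_num
    have h3 : Real.exp 1 ^ 10 ≤ 2.7182818286 ^ 10 :=
      pow_le_pow_left₀ (Real.exp_pos 1).le Real.exp_one_lt_d9.le 10
    have h2 : (2.7182818286:ℝ) ^ 10 ≤ 48^6 := by norm_num
    linarith [he ▸ h3]
  have hdL3 : d * L^3 ≤ 4.5 * m := by
    set x : ℝ := m ^ ((6:ℕ):ℝ)⁻¹ with hx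
    have hxm : x ^ (6:ℕ) = m := Real.rpow_inv_natCast_pow hm0.le (by norm_num)
    have hxge : 48*d+48 ≤ x := by
      have h5 := Real.rpow_le_rpow (by positivity : (0:ℝ) ≤ (48*d+48)^6) hm
        (by positivity : (0:ℝ) ≤ (((6:ℕ):ℝ))⁻¹)
      rwa [Real.pow_rpow_inv_natCast (by linarith) (by norm_num)] at h5
    have hx0 : (0:ℝ) < x := by linarith
    have hlx : L ≤ 6 * x := by
      have h6 : L = 6 * Real.log x := by
        rw [hLdef, ← hxm, Real.log_pow]; push_cast; ring
      have hlog : Real.log x ≤ x := (Real.log_le_sub_one_of_pos hx0).trans (by linarith)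
      linarith
    have hL0 : (0:ℝ) ≤ L := by linarith
    have h1 : L^3 ≤ (6*x)^3 := pow_le_pow_left₀ hL0 hlx 3
    have h2 : d * L^3 ≤ d * (216 * x^3) := by nlinarith
    have h3 : 216 * d ≤ 4.5 * x^3 := by nlinarith [sq_nonneg x, sq_nonneg d]
    have h4 : d * (216 * x^3) ≤ 4.5 * x^3 * x^3 := by nlinarith [pow_pos hx0 3]
    have h5 : x^3 * x^3 = m := by rw [← hxm]; ring
    nlinarith
  have hL3 : (1000:ℝ) ≤ L^3 := by
    have := pow_le_pow_left₀ (by norm_num : (0:ℝ) ≤ 10) hL10 3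
    norm_num at this; linarith
  have hL2 : (100:ℝ) ≤ L^2 := by nlinarith
  have hdm : d < m := by nlinarith
  set θ := d / m with hθdef
  have hθ0 : 0 < θ := div_pos hd hm0
  have hθ1 : θ < 1 := (div_lt_one hm0).mpr hdm
  have hl2 : 0 < Real.log 2 := Real.log_pos one_lt_two
  have hl2u : Real.log 2 < 1 := by
    have := Real.log_two_lt_d9
    linarith
  set T : ℝ := C1 m * Real.log 2 * m / d + (3 / 2) * (Real.log m) ^ 2 with hTdef
  have hθT : θ * T = Real.log 2 + 10 / L + (3/2) * θ * L^2 := by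
    rw [hTdef, C1, hθdef, ← hLdef]
    field_simp
  have hθL3 : θ * L^3 ≤ 4.5 := by
    rw [hθdef, div_mul_eq_mul_div, div_le_iff₀ hm0]; linarith
  have hθL1 : θ * L ≤ 1 := by nlinarith
  -- θT ≥ log 2 + 10/L ; also T ≥ log2/θ + 1
  have hθT_lb : Real.log 2 + 10 / L ≤ θ * T := by
    rw [hθT]; nlinarith
  have hT_lb : Real.log 2 / θ + 1 ≤ T := by
    have h2 : Real.log 2 + θ ≤ θ * T := by
      rw [hθT]
      have h1 : θ ≤ (3/2) * θ * L^2 := by nlinarith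
      have h3 : 0 < 10 / L := by positivity
      linarith
    rw [div_add' _ _ _ hθ0.ne', div_le_iff₀ hθ0, mul_comm]
    linarith
  have hT0 : 0 ≤ T := le_trans (by positivity : (0:ℝ) ≤ Real.log 2 / θ + 1) hT_lb
  clear_value L θ T
  have hdm0 : 0 < d/m := by rw [← hθdef]; exact hθ0
  have hdm1 : d/m < 1 := by rw [← hθdef]; exact hθ1
  -- ### integers k₀ N
  set k₀ : ℕ := ⌈Real.log 2 / θ⌉₊ with hk₀def
  have hk₀l : Real.log 2 ≤ θ * k₀ := by
    have := Nat.le_ceil (Real.log 2 / θ)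
    rw [div_le_iff₀ hθ0] at this
    linarith [this]
  have hk₀u : (k₀:ℝ) < Real.log 2 / θ + 1 := Nat.ceil_lt_add_one (by positivity)
  set N : ℕ := ⌊T⌋₊ + 1 with hNdef
  have hTN : T < N := by
    have := Nat.lt_floor_add_one T
    rw [hNdef]; push_cast; linarith
  have hk₀N_r : (k₀:ℝ) < N := hk₀u.trans_le (hT_lb.trans hTN.le)
  have hk₀N : k₀ ≤ N := by exact_mod_cast hk₀N_r.le
  clear_value k₀ N
  -- ### ratio bound
  have hq0 : (0:ℝ) ≤ 1 - θ := by linarith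
  have hrat : ∀ k : ℕ, Real.log 2 ≤ θ * k →
      (1 - d/m)^k / (1 - (1 - d/m)^(k+1)) ≤ 2 * Real.exp (-(θ * k)) := by
    intro k hk
    rw [← hθdef]
    have hqe : 1 - θ ≤ Real.exp (-θ) := by
      have := Real.add_one_le_exp (-θ); linarith
    have hqk : (1-θ)^k ≤ Real.exp (-(θ * k)) := by
      calc (1-θ)^k ≤ Real.exp (-θ) ^ k := pow_le_pow_left₀ hq0 hqe k
        _ = Real.exp (-(θ * k)) := by
            rw [← Real.exp_nat_mul]; congr 1; ring
    have hhalf : Real.exp (-(θ * k)) ≤ 1/2 := by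
      have h1 : Real.exp (-(θ * k)) ≤ Real.exp (-(Real.log 2)) :=
        Real.exp_le_exp.mpr (by linarith)
      rw [Real.exp_neg (Real.log 2), Real.exp_log (by norm_num : (0:ℝ) < 2)] at h1
      norm_num at h1
      linarith
    have hk1 : (1-θ)^(k+1) ≤ 1/2 := by
      calc (1-θ)^(k+1) = (1-θ)^k * (1-θ) := pow_succ _ _
        _ ≤ (1-θ)^k * 1 := mul_le_mul_of_nonneg_left (by linarith) (pow_nonneg hq0 k)
        _ = (1-θ)^k := mul_one _
        _ ≤ 1/2 := hqk.trans hhalf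
    calc (1-θ)^k / (1 - (1-θ)^(k+1)) ≤ Real.exp (-(θ * k)) / (1/2) :=
        div_le_div₀ (Real.exp_pos _).le hqk (by norm_num) (by linarith)
      _ = 2 * Real.exp (-(θ * k)) := by ring
  -- ### inductive product bound
  have hstep : ∀ k, k₀ ≤ k → rhoTilde d m k ≤
      rhoTilde d m k₀ * ∏ i ∈ Finset.Ico k₀ k, (2 * Real.exp (-(θ * i))) := by
    intro k hk
    induction k, hk using Nat.le_induction with
    | base => simp
    | succ k hk ih =>
      rw [rhoTilde_succ', Finset.prod_Ico_succ_top hk, ← mul_assoc]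
      have hrk : Real.log 2 ≤ θ * k := by
        calc Real.log 2 ≤ θ * k₀ := hk₀l
          _ ≤ θ * k := by
              apply mul_le_mul_of_nonneg_left _ hθ0.le
              exact_mod_cast hk
      have h1 := hrat k hrk
      have h2 : 0 ≤ (1 - d/m)^k / (1 - (1 - d/m)^(k+1)) := by
        apply div_nonneg (pow_nonneg (by rw [← hθdef]; exact hq0) k)
        have : (1 - d/m)^(k+1) < 1 := by
          rw [← hθdef]
          exact pow_lt_one₀ hq0 (by linarith) (Nat.succ_ne_zero k)
        linarith
      refine mul_le_mul ih h1 h2 (mul_nonneg ?_ ?_)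
      · exact (rhoTilde_pos' hdm0 hdm1 k₀).le
      · exact Finset.prod_nonneg fun i _ => by positivity
  -- ### quantities
  set nn : ℕ := N - k₀ with hnndef
  have hnn_cast : (nn:ℝ) = (N:ℝ) - (k₀:ℝ) := by
    rw [hnndef]; push_cast [hk₀N]; ring
  clear_value nn
  set Pb : ℝ := Real.exp (-(θ * ((nn:ℝ) * ((nn:ℝ) - 1) / 2))) with hPbdef
  set r : ℝ := 2 * Real.exp (-(θ * N)) with hrdef
  have hr0 : 0 ≤ r := by positivity
  have hrle : r ≤ Real.exp (-(10 / L)) := by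
    have hθN : Real.log 2 + 10 / L ≤ θ * N := by
      calc Real.log 2 + 10 / L ≤ θ * T := hθT_lb
        _ ≤ θ * N := mul_le_mul_of_nonneg_left hTN.le hθ0.le
    calc r ≤ 2 * Real.exp (-(Real.log 2 + 10 / L)) := by
          rw [hrdef]
          exact mul_le_mul_of_nonneg_left (Real.exp_le_exp.mpr (by linarith)) (by norm_num)
      _ = 2 * (Real.exp (-(Real.log 2)) * Real.exp (-(10/L))) := by
          rw [← Real.exp_add]; ring_nf
      _ = Real.exp (-(10/L)) := by
          rw [Real.exp_neg, Real.exp_log (by norm_num : (0:ℝ) < 2)]; ring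
  have hxL : 0 < 10 / L ∧ 10 / L ≤ 1 := by
    constructor
    · positivity
    · rw [div_le_one (by linarith)]; linarith
  have hexpx : Real.exp (-(10 / L)) ≤ 1 - 5 / L := by
    set x := 10 / L with hxdef
    have h1 : 1 + x ≤ Real.exp x := by have := Real.add_one_le_exp x; linarith
    have h2 : Real.exp (-x) = (Real.exp x)⁻¹ := Real.exp_neg x
    have h3 : (Real.exp x)⁻¹ ≤ (1 + x)⁻¹ := by
      apply inv_anti₀ (by linarith [hxL.1]) h1
    have h4 : (1 + x)⁻¹ ≤ 1 - x/2 := by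
      rw [inv_le_iff_one_le_mul₀ (by linarith [hxL.1])]
      nlinarith [hxL.1, hxL.2]
    have : 5 / L = x / 2 := by rw [hxdef]; ring
    rw [this]; linarith
  have hr1 : r < 1 := by
    have : 0 < 5 / L := by positivity
    linarith [hrle.trans hexpx]
  have hinv : (1 - r)⁻¹ ≤ L / 5 := by
    have h5L : 0 < 5 / L := by positivity
    have h1r : 5 / L ≤ 1 - r := by linarith [hrle.trans hexpx]
    calc (1-r)⁻¹ ≤ (5/L)⁻¹ := inv_anti₀ h5L h1r
      _ = L / 5 := by rw [inv_div]
  -- ### bound on prefix product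
  have hPb : (∏ i ∈ Finset.Ico k₀ N, (2 * Real.exp (-(θ * i)))) ≤ Pb := by
    have hform : ∀ i : ℕ, (2:ℝ) * Real.exp (-(θ * i)) = Real.exp (Real.log 2 + -(θ * i)) := by
      intro i
      rw [Real.exp_add, Real.exp_log (by norm_num : (0:ℝ) < 2)]
    rw [Finset.prod_congr rfl (fun i _ => hform i), ← Real.exp_sum, hPbdef]
    apply Real.exp_le_exp.mpr
    have hsumle : ∑ i ∈ Finset.Ico k₀ N, (Real.log 2 + -(θ * i)) ≤
        ∑ i ∈ Finset.Ico k₀ N, (θ * k₀ + -(θ * i)) := by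
      apply Finset.sum_le_sum
      intro i _
      linarith [hk₀l]
    have hsumeq : ∑ i ∈ Finset.Ico k₀ N, ((θ:ℝ) * k₀ + -(θ * i)) =
        -(θ * ((nn:ℝ) * ((nn:ℝ) - 1) / 2)) := by
      rw [Finset.sum_Ico_eq_sum_range]
      have : ∀ j : ℕ, (θ:ℝ) * k₀ + -(θ * ((k₀ + j : ℕ):ℝ)) = -θ * j := by
        intro j; push_cast; ring
      rw [Finset.sum_congr rfl (fun j _ => this j), ← Finset.mul_sum, sum_range_cast_id,
        hnn_cast]
      push_cast [hk₀N]
      ring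
    linarith [hsumeq ▸ hsumle]
  -- ### main per-term bound
  have hS : Summable (rhoTilde d m) := rhoTilde_summable' hdm0 hdm1
  have hk₀pos : 0 < rhoTilde d m k₀ := rhoTilde_pos' hdm0 hdm1 k₀
  have hSk₀ : rhoTilde d m k₀ ≤ ∑' j, rhoTilde d m j :=
    Summable.le_tsum hS k₀ (fun j _ => (rhoTilde_pos' hdm0 hdm1 j).le)
  have hPb0 : 0 < Pb := Real.exp_pos _
  have hmain : ∀ k : ℕ, N ≤ k → rhoStat d m k ≤ Pb * r ^ (k - N) := by
    intro k hNk
    have hk₀k : k₀ ≤ k := hk₀N.trans hNk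
    have h1 : rhoStat d m k ≤ rhoTilde d m k / rhoTilde d m k₀ := by
      unfold rhoStat
      gcongr
      exact (rhoTilde_pos' hdm0 hdm1 k).le
    have h2 : rhoTilde d m k / rhoTilde d m k₀ ≤
        ∏ i ∈ Finset.Ico k₀ k, (2 * Real.exp (-(θ * i))) := by
      rw [div_le_iff₀ hk₀pos, mul_comm]
      exact hstep k hk₀k
    have h3 : (∏ i ∈ Finset.Ico k₀ k, (2 * Real.exp (-(θ * i)))) =
        (∏ i ∈ Finset.Ico k₀ N, (2 * Real.exp (-(θ * i)))) *
        (∏ i ∈ Finset.Ico N k, (2 * Real.exp (-(θ * i)))) :=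
      (Finset.prod_Ico_consecutive _ hk₀N hNk).symm
    have h4 : (∏ i ∈ Finset.Ico N k, (2 * Real.exp (-(θ * i)))) ≤ r ^ (k - N) := by
      have hb : ∀ i ∈ Finset.Ico N k, (2:ℝ) * Real.exp (-(θ * i)) ≤ r := by
        intro i hi
        rw [Finset.mem_Ico] at hi
        rw [hrdef]
        have : (N:ℝ) ≤ i := by exact_mod_cast hi.1
        have := mul_le_mul_of_nonneg_left this hθ0.le
        exact mul_le_mul_of_nonneg_left (Real.exp_le_exp.mpr (by linarith)) (by norm_num)
      calc (∏ i ∈ Finset.Ico N k, (2 * Real.exp (-(θ * i))))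
          ≤ ∏ _i ∈ Finset.Ico N k, r :=
            Finset.prod_le_prod (fun i _ => by positivity) hb
        _ = r ^ (k - N) := by rw [Finset.prod_const, Nat.card_Ico]
    calc rhoStat d m k ≤ rhoTilde d m k / rhoTilde d m k₀ := h1
      _ ≤ ∏ i ∈ Finset.Ico k₀ k, (2 * Real.exp (-(θ * i))) := h2
      _ = _ * _ := h3
      _ ≤ Pb * r ^ (k - N) := by
          apply mul_le_mul hPb h4 (Finset.prod_nonneg fun i _ => by positivity) hPb0.le
  -- ### tsum manipulation
  set g : ℕ → ℝ := fun k => if N ≤ k then Pb * r ^ (k - N) else 0 with hgdef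
  have hg_nonneg : ∀ k, 0 ≤ g k := by
    intro k
    rw [hgdef]
    dsimp only
    split
    · positivity
    · exact le_refl 0
  have hg_shift : (fun n : ℕ => g (n + N)) = fun n : ℕ => Pb * r ^ n := by
    funext n
    rw [hgdef]
    simp [Nat.le_add_left, Nat.add_sub_cancel]
  have hgeo : Summable (fun n : ℕ => Pb * r ^ n) :=
    (summable_geometric_of_lt_one hr0 hr1).mul_left Pb
  have hg_summ : Summable g := (summable_nat_add_iff N).mp (hg_shift ▸ hgeo)
  have hg_tsum : ∑' k, g k = Pb * (1 - r)⁻¹ := by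
    have h0 := Summable.sum_add_tsum_nat_add (f := g) N hg_summ
    have h1 : ∑ i ∈ Finset.range N, g i = 0 := by
      apply Finset.sum_eq_zero
      intro i hi
      rw [Finset.mem_range] at hi
      rw [hgdef]
      simp only
      rw [if_neg (by omega)]
    have h2 : ∑' n : ℕ, g (n + N) = Pb * (1 - r)⁻¹ := by
      rw [hg_shift, tsum_mul_left, tsum_geometric_of_lt_one hr0 hr1]
    rw [← h0, h1, h2, zero_add]
  have hρ_nonneg : ∀ k, 0 ≤ rhoStat d m k := by
    intro k
    unfold rhoStat
    apply div_nonneg (rhoTilde_pos' hdm0 hdm1 k).le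
    exact le_trans hk₀pos.le hSk₀
  have hf_le_g : ∀ k : ℕ, (if T < (k:ℝ) then rhoStat d m k else 0) ≤ g k := by
    intro k
    by_cases hk : T < (k:ℝ)
    · have hNk : N ≤ k := by
        have h1 : ⌊T⌋₊ < k := (Nat.floor_lt hT0).mpr hk
        omega
      rw [if_pos hk, hgdef]
      simp only
      rw [if_pos hNk]
      exact hmain k hNk
    · rw [if_neg hk]
      exact hg_nonneg k
  have hf_summ : Summable (fun k : ℕ => if T < (k:ℝ) then rhoStat d m k else 0) := by
    apply Summable.of_nonneg_of_le
      (fun k => by split <;> [exact hρ_nonneg k; exact le_refl 0])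
      (fun k => by split <;> [exact le_refl _; exact hρ_nonneg k])
    exact hS.div_const _
  have htsum_le : (∑' k : ℕ, if T < (k:ℝ) then rhoStat d m k else 0) ≤ Pb * (1 - r)⁻¹ := by
    rw [← hg_tsum]
    exact Summable.tsum_le_tsum hf_le_g hf_summ hg_summ
  -- ### final numeric bound
  refine le_trans (le_of_eq ?_) (le_trans htsum_le ?_)
  · rfl
  clear_value Pb r g
  set A : ℝ := 10 / (L * θ) with hAdef
  have hA10 : 10 ≤ A := by
    rw [hAdef, le_div_iff₀ (by positivity)]
    nlinarith only [hθL1, hL10, hθ0]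
  have hnA : A ≤ (nn:ℝ) := by
    have hTval : T = Real.log 2 / θ + A + (3/2) * L^2 := by
      have : θ * T = θ * (Real.log 2 / θ + A + (3/2) * L^2) := by
        rw [hθT, hAdef]
        field_simp
      exact mul_left_cancel₀ hθ0.ne' this
    rw [hnn_cast]
    have h32 : 1 ≤ (3/2) * L^2 := by nlinarith only [hL2]
    linarith only [hTN, hk₀u, hTval, h32]
  have hkey : 10 * L ≤ θ * ((nn:ℝ) * ((nn:ℝ) - 1) / 2) := by
    have hn10 : 10 ≤ (nn:ℝ) := hA10.trans hnA
    have h91 : (9/10) * A ≤ (nn:ℝ) - 1 := by linarith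
    have hprod : A * ((9/10) * A) ≤ (nn:ℝ) * ((nn:ℝ) - 1) := by
      apply mul_le_mul hnA h91 (by linarith only [hA10]) (by linarith only [hA10, hnA])
    have hθA2 : θ * (A * ((9/10)*A) / 2) = 45 / (L^2 * θ) := by
      rw [hAdef]
      field_simp
      ring
    have h45 : 10 * L ≤ 45 / (L^2 * θ) := by
      rw [le_div_iff₀ (by positivity)]
      nlinarith only [hθL3, hL10, hθ0]
    calc 10 * L ≤ 45 / (L^2 * θ) := h45
      _ = θ * (A * ((9/10)*A) / 2) := hθA2.symm
      _ ≤ θ * ((nn:ℝ) * ((nn:ℝ) - 1) / 2) := by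
          apply mul_le_mul_of_nonneg_left _ hθ0.le
          linarith
  have hPb_le : Pb ≤ Real.exp (-(10 * L)) := by
    rw [hPbdef]
    exact Real.exp_le_exp.mpr (by linarith)
  have hexp_eq : Real.exp (-(10 * L)) = m ^ (-10 : ℝ) := by
    rw [Real.rpow_def_of_pos hm0, ← hLdef]
    congr 1
    ring
  have hLm : L ≤ m := by
    have := Real.log_le_sub_one_of_pos hm0
    rw [← hLdef] at this
    linarith
  have h1rpos : (0:ℝ) ≤ (1 - r)⁻¹ := inv_nonneg.mpr (by linarith only [hr1])
  calc Pb * (1 - r)⁻¹ ≤ Real.exp (-(10 * L)) * (L / 5) := by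
        apply mul_le_mul hPb_le hinv h1rpos (Real.exp_pos _).le
    _ ≤ m ^ (-10 : ℝ) * m := by
        rw [hexp_eq]
        apply mul_le_mul_of_nonneg_left _ (by positivity)
        linarith
    _ = m ^ (-9 : ℝ) := by
        have h : m ^ (-10:ℝ) * m ^ (1:ℝ) = m ^ (-9:ℝ) := by
          rw [← Real.rpow_add hm0]; norm_num
        rw [Real.rpow_one] at h
        exact h
end

section
/- Let ε ∈ (0, 1/2) and let M, N be integers with 1 ≤ M < N. Let (X_n)_{n≥0} be a stochastic process on a probability space taking values in the nonnegative integers, adapted to a filtration (F_n)_{n≥0}, with X_0 = M almost surely, such that almost surely |X_{n+1} − X_n| = 1 on the event {X_n ≥ 1} and X_{n+1} = X_n + 1 on the event {X_n = 0}, and such that for every n the conditional probability satisfies P(X_{n+1} = X_n + 1 | F_n) ≤ 1/2 − ε almost surely on the event {X_n ≥ M}. Then the probability that the process reaches the value N strictly before reaching the value M − 1 is at most (1 − 2ε)^{N−M}. -/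
/-!
Put `r = c / (1 - c)` with `c = 1/2 - ε`. The function `f x = r ^ (N - x)` satisfies
`c f(x+1) + (1-c) f(x-1) = f x`, so as long as the walk stays strictly between `M - 1` and `N`
the expected value of `f` cannot increase from one step to the next: an up-step has
conditional probability at most `c` and `f` is increasing. Hence the potential
`E[f(X n); no barrier hit by time n] + P(N hit before M - 1 by time n)` is nonincreasing in `n`
(a walk stopped at `N` keeps the value `f N = 1`). It starts at `f M = r ^ (N - M)`, it dominates
the probability term because `f ≥ 0`, and `r ≤ 1 - 2ε`.
-/

open MeasureTheory

/-- The first hitting time (valued in `ℕ∞`) of the value `v` by the process `X` along the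
trajectory `ω`: `τ_v = min {n : X_n = v}`, with `min ∅ = ∞`. -/
noncomputable def hitTime {Ω : Type*} (X : ℕ → Ω → ℕ) (v : ℕ) (ω : Ω) : ℕ∞ :=
  sInf {t : ℕ∞ | ∃ k : ℕ, (k : ℕ∞) = t ∧ X k ω = v}

open Set

section HitTime

variable {Ω : Type*} {X : ℕ → Ω → ℕ} {v : ℕ} {ω : Ω}

lemma hitTime_lt_iff {t : ℕ∞} : hitTime X v ω < t ↔ ∃ k : ℕ, (k : ℕ∞) < t ∧ X k ω = v := by
  simp only [hitTime, sInf_lt_iff, mem_ofPred_eq]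
  constructor
  · rintro ⟨_, ⟨k, rfl, hk⟩, hkt⟩
    exact ⟨k, hkt, hk⟩
  · rintro ⟨k, hkt, hk⟩
    exact ⟨k, ⟨k, rfl, hk⟩, hkt⟩

lemma natCast_lt_hitTime_iff {k : ℕ} : (k : ℕ∞) < hitTime X v ω ↔ ∀ j ≤ k, X j ω ≠ v := by
  rw [← ENat.add_one_le_iff (ENat.natCast_ne_top k), hitTime, le_sInf_iff]
  simp only [mem_ofPred_eq, forall_exists_index, and_imp]
  rw [forall_comm]
  simp only [forall_eq']
  exact forall_congr' fun j => by norm_cast; omega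

end HitTime

lemma mem_Ioo_of_forall_ne {x : ℕ → ℕ} {L b : ℕ} (h0 : x 0 ∈ Ioo L b)
    (hstep : ∀ n, x n ∈ Ioo L b → x (n + 1) = x n + 1 ∨ x (n + 1) + 1 = x n) :
    ∀ n, (∀ k ≤ n, x k ≠ L ∧ x k ≠ b) → x n ∈ Ioo L b
  | 0, _ => h0
  | n + 1, h => by
    have hn := mem_Ioo_of_forall_ne h0 hstep n fun k hk => h k (by omega)
    have := h (n + 1) le_rfl
    simp only [mem_Ioo] at hn ⊢
    rcases hstep n hn with hup | hdown <;> omega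

lemma setIntegral_mul_le_of_condExp_le {Ω : Type*} {m m0 : MeasurableSpace Ω} {μ : Measure Ω}
    [IsFiniteMeasure μ] (hm : m ≤ m0) {s : Set Ω} (hs : MeasurableSet[m] s) {φ u : Ω → ℝ}
    {C c : ℝ} (hφ : StronglyMeasurable[m] φ) (hφC : ∀ ω, ‖φ ω‖ ≤ C) (hφ0 : ∀ ω ∈ s, 0 ≤ φ ω)
    (hu : Integrable u μ) (hcond : ∀ᵐ ω ∂μ, ω ∈ s → μ[u | m] ω ≤ c) :
    ∫ ω in s, φ ω * u ω ∂μ ≤ c * ∫ ω in s, φ ω ∂μ := by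
  have hφ_meas : AEStronglyMeasurable φ μ := (hφ.mono hm).aestronglyMeasurable
  have hφu : Integrable (φ * u) μ := hu.bdd_mul hφ_meas (ae_of_all _ hφC)
  have hφ_int : Integrable φ μ := .of_bound hφ_meas C (ae_of_all _ hφC)
  calc ∫ ω in s, φ ω * u ω ∂μ = ∫ ω in s, μ[φ * u | m] ω ∂μ :=
        (setIntegral_condExp hm hφu hs).symm
    _ = ∫ ω in s, φ ω * μ[u | m] ω ∂μ := by
        refine setIntegral_congr_ae (hm s hs) ?_
        filter_upwards [condExp_mul_of_stronglyMeasurable_left hφ hφu hu] with ω h _ using h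
    _ ≤ ∫ ω in s, φ ω * c ∂μ := by
        refine setIntegral_mono_ae_restrict ?_ (hφ_int.mul_const c).integrableOn ?_
        · exact (integrable_condExp.bdd_mul hφ_meas (ae_of_all _ hφC)).integrableOn
        · rw [Filter.EventuallyLE, ae_restrict_iff' (hm s hs)]
          filter_upwards [hcond] with ω hω hωs
          exact mul_le_mul_of_nonneg_left (hω hωs) (hφ0 ω hωs)
    _ = c * ∫ ω in s, φ ω ∂μ := by rw [integral_mul_const, mul_comm]

lemma integrable_comp_of_norm_le {Ω : Type*} {m0 : MeasurableSpace Ω} {μ : Measure Ω}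
    [IsFiniteMeasure μ] {Z : Ω → ℕ} (hZ : Measurable Z) {f : ℕ → ℝ} {C : ℝ}
    (hfC : ∀ x, ‖f x‖ ≤ C) : Integrable (fun ω => f (Z ω)) μ :=
  .of_bound (measurable_from_top.comp hZ).aestronglyMeasurable C (ae_of_all _ fun _ => hfC _)

lemma setIntegral_comp_succ_le {Ω : Type*} {m0 : MeasurableSpace Ω} {μ : Measure Ω}
    [IsFiniteMeasure μ] {F : Filtration ℕ m0} {X : ℕ → Ω → ℕ}
    (hadapted : ∀ n, Measurable[F n] (X n)) {n : ℕ} {s : Set Ω} (hs : MeasurableSet[F n] s)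
    {f : ℕ → ℝ} {C c : ℝ} (hf_mono : Monotone f) (hfC : ∀ x, ‖f x‖ ≤ C)
    (hstep : ∀ᵐ ω ∂μ, ω ∈ s → X (n + 1) ω = X n ω + 1 ∨ X (n + 1) ω + 1 = X n ω)
    (hdrift : ∀ᵐ ω ∂μ, ω ∈ s →
      (μ[Set.indicator {ω' | X (n + 1) ω' = X n ω' + 1} (fun _ => (1 : ℝ)) | F n]) ω ≤ c) :
    ∫ ω in s, f (X (n + 1) ω) ∂μ ≤
      ∫ ω in s, (c * f (X n ω + 1) + (1 - c) * f (X n ω - 1)) ∂μ := by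
  set u : Ω → ℝ := Set.indicator {ω' | X (n + 1) ω' = X n ω' + 1} (fun _ => 1)
  set φ : Ω → ℝ := fun ω => f (X n ω + 1) - f (X n ω - 1)
  have hXm : ∀ k, Measurable (X k) := fun k => (hadapted k).mono (F.le k) le_rfl
  have hu : Integrable u μ :=
    (integrable_const 1).indicator (measurableSet_eq_fun (hXm (n + 1)) ((hXm n).add_const 1))
  have hφ : StronglyMeasurable[F n] φ :=
    ((measurable_from_top (f := fun x => f (x + 1) - f (x - 1))).comp
      (hadapted n)).stronglyMeasurable
  have hφC : ∀ ω, ‖φ ω‖ ≤ 2 * C := fun ω =>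
    (norm_sub_le _ _).trans (by linarith [hfC (X n ω + 1), hfC (X n ω - 1)])
  have hφ0 : ∀ ω ∈ s, 0 ≤ φ ω := fun ω _ => sub_nonneg.2 (hf_mono (by omega))
  have hpred_int : Integrable (fun ω => f (X n ω - 1)) μ :=
    integrable_comp_of_norm_le ((hXm n).sub_const 1) hfC
  have hφ_int : Integrable φ μ :=
    (integrable_comp_of_norm_le ((hXm n).add_const 1) hfC).sub hpred_int
  calc ∫ ω in s, f (X (n + 1) ω) ∂μ = ∫ ω in s, (f (X n ω - 1) + φ ω * u ω) ∂μ := by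
        refine setIntegral_congr_ae (F.le n s hs) ?_
        filter_upwards [hstep] with ω hω hωs
        rcases hω hωs with hup | hdown
        · simp [u, φ, hup]
        · simp [u, φ, show X (n + 1) ω = X n ω - 1 by omega]
    _ = ∫ ω in s, f (X n ω - 1) ∂μ + ∫ ω in s, φ ω * u ω ∂μ :=
        integral_add hpred_int.integrableOn
          (hu.bdd_mul hφ_int.aestronglyMeasurable (ae_of_all _ hφC)).integrableOn
    _ ≤ ∫ ω in s, f (X n ω - 1) ∂μ + c * ∫ ω in s, φ ω ∂μ := by
        gcongr
        exact setIntegral_mul_le_of_condExp_le (F.le n) hs hφ hφC hφ0 hu hdrift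
    _ = ∫ ω in s, (c * f (X n ω + 1) + (1 - c) * f (X n ω - 1)) ∂μ := by
        rw [← integral_const_mul, ← integral_add hpred_int.integrableOn
          (hφ_int.const_mul c).integrableOn]
        congr with ω
        ring

section Avoidance

variable {Ω : Type*} (X : ℕ → Ω → ℕ) (L b : ℕ)

def avoids (n : ℕ) : Set Ω := {ω | ∀ k ≤ n, X k ω ≠ L ∧ X k ω ≠ b}

def reachesAvoiding (k : ℕ) : Set Ω := {ω | X k ω = b ∧ ∀ j ≤ k, X j ω ≠ L}

variable {X L b}

lemma setOf_hitTime_lt_hitTime :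
    {ω | hitTime X b ω < hitTime X L ω} = ⋃ k, reachesAvoiding X L b k := by
  ext ω
  simp [hitTime_lt_iff, natCast_lt_hitTime_iff, reachesAvoiding, and_comm]

lemma avoids_succ_subset (n : ℕ) : avoids X L b (n + 1) ⊆ avoids X L b n :=
  fun _ h k hk => h k (by omega)

lemma accumulate_reachesAvoiding_subset_compl (n : ℕ) :
    accumulate (reachesAvoiding X L b) n ⊆ (avoids X L b n)ᶜ := by
  simp only [accumulate_def, iUnion_subset_iff]
  exact fun k hk ω hω hA => (hA k hk).2 hω.1

lemma reachesAvoiding_succ_subset (n : ℕ) :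
    reachesAvoiding X L b (n + 1) \ accumulate (reachesAvoiding X L b) n ⊆ avoids X L b n := by
  rintro ω ⟨⟨-, hL⟩, hS⟩ k hk
  refine ⟨hL k (by omega), fun hb => hS ?_⟩
  exact mem_accumulate.2 ⟨k, hk, hb, fun j hj => hL j (by omega)⟩

lemma measurableSet_avoids {m : MeasurableSpace Ω} {n : ℕ} (hX : ∀ k ≤ n, Measurable[m] (X k)) :
    MeasurableSet[m] (avoids X L b n) := by
  have : avoids X L b n = ⋂ k ≤ n, (X k ⁻¹' {L})ᶜ ∩ (X k ⁻¹' {b})ᶜ := by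
    ext ω; simp [avoids]
  rw [this]
  exact .biInter (to_countable _) fun k hk =>
    (hX k hk (.singleton L)).compl.inter (hX k hk (.singleton b)).compl

lemma measurableSet_accumulate_reachesAvoiding {m0 : MeasurableSpace Ω}
    (hX : ∀ n, Measurable (X n)) (n : ℕ) :
    MeasurableSet (accumulate (reachesAvoiding X L b) n) := by
  have : ∀ k, reachesAvoiding X L b k = X k ⁻¹' {b} ∩ ⋂ j ≤ k, (X j ⁻¹' {L})ᶜ := fun k => by
    ext ω; simp [reachesAvoiding]
  simp only [accumulate_def, this]
  exact .biUnion (to_countable _) fun k _ => (hX k (.singleton b)).inter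
    (.biInter (to_countable _) fun j _ => (hX j (.singleton L)).compl)

lemma indicator_avoids_succ_add_le {h : Ω → ℝ} {n : ℕ} (hh0 : ∀ ω, 0 ≤ h ω)
    (hhb : ∀ ω, X (n + 1) ω = b → 1 ≤ h ω) (ω : Ω) :
    (avoids X L b (n + 1)).indicator h ω +
        (accumulate (reachesAvoiding X L b) (n + 1)).indicator 1 ω ≤
      (avoids X L b n).indicator h ω + (accumulate (reachesAvoiding X L b) n).indicator 1 ω := by
  rw [accumulate_succ]
  by_cases hS : ω ∈ accumulate (reachesAvoiding X L b) n
  · have hA : ω ∉ avoids X L b (n + 1) := fun hA =>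
      accumulate_reachesAvoiding_subset_compl n hS (avoids_succ_subset n hA)
    rw [indicator_of_notMem hA, indicator_of_mem (mem_union_left _ hS), indicator_of_mem hS]
    gcongr
    exact indicator_nonneg (fun ω _ => hh0 ω) ω
  by_cases hE : ω ∈ reachesAvoiding X L b (n + 1)
  · have hA : ω ∉ avoids X L b (n + 1) := fun hA => (hA (n + 1) le_rfl).2 hE.1
    rw [indicator_of_notMem hA, indicator_of_mem (mem_union_right _ hE),
      indicator_of_mem (reachesAvoiding_succ_subset n ⟨hE, hS⟩), indicator_of_notMem hS]
    simpa using hhb ω hE.1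
  · have hSE : ω ∉ accumulate (reachesAvoiding X L b) n ∪ reachesAvoiding X L b (n + 1) := by
      simp [hS, hE]
    rw [indicator_of_notMem hSE, indicator_of_notMem hS, add_zero, add_zero]
    exact indicator_le_indicator_of_subset (avoids_succ_subset n) hh0 ω

lemma setIntegral_avoids_succ_add_measureReal_le {m0 : MeasurableSpace Ω} {μ : Measure Ω}
    [IsFiniteMeasure μ] (hX : ∀ n, Measurable (X n)) {n : ℕ} {h : Ω → ℝ} (hh : Integrable h μ)
    (hh0 : ∀ ω, 0 ≤ h ω) (hhb : ∀ ω, X (n + 1) ω = b → 1 ≤ h ω) :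
    ∫ ω in avoids X L b (n + 1), h ω ∂μ + μ.real (accumulate (reachesAvoiding X L b) (n + 1)) ≤
      ∫ ω in avoids X L b n, h ω ∂μ + μ.real (accumulate (reachesAvoiding X L b) n) := by
  have hA : ∀ n, MeasurableSet (avoids X L b n) := fun n => measurableSet_avoids fun k _ => hX k
  have hS := measurableSet_accumulate_reachesAvoiding (L := L) (b := b) hX
  have hint : ∀ n, Integrable ((avoids X L b n).indicator h) μ := fun n => hh.indicator (hA n)
  have hint_one : ∀ n, Integrable ((accumulate (reachesAvoiding X L b) n).indicator 1) μ :=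
    fun n => (integrable_const (1 : ℝ)).indicator (hS n)
  have key := integral_mono ((hint _).add (hint_one _)) ((hint _).add (hint_one _))
    (indicator_avoids_succ_add_le hh0 hhb)
  rwa [integral_add' (hint _) (hint_one _), integral_add' (hint _) (hint_one _),
    integral_indicator (hA _), integral_indicator (hA _), integral_indicator_one (hS _),
    integral_indicator_one (hS _)] at key

end Avoidance

section Potential

variable {Ω : Type*} {m0 : MeasurableSpace Ω} {μ : Measure Ω} {X : ℕ → Ω → ℕ} {L b : ℕ}
  {f : ℕ → ℝ}

variable (μ X L b f) in
noncomputable def hitPotential (n : ℕ) : ℝ :=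
  ∫ ω in avoids X L b n, f (X n ω) ∂μ + μ.real (accumulate (reachesAvoiding X L b) n)

lemma measureReal_accumulate_le_hitPotential (hf0 : ∀ x, 0 ≤ f x) (n : ℕ) :
    μ.real (accumulate (reachesAvoiding X L b) n) ≤ hitPotential μ X L b f n :=
  le_add_of_nonneg_left (integral_nonneg fun _ => hf0 _)

lemma hitPotential_zero_le [IsProbabilityMeasure μ] (hX : Measurable (X 0)) {x₀ : ℕ}
    (hx₀ : x₀ ≠ b) (h0 : ∀ᵐ ω ∂μ, X 0 ω = x₀) (hf0 : ∀ x, 0 ≤ f x) (hf1 : ∀ x, f x ≤ 1) :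
    hitPotential μ X L b f 0 ≤ f x₀ := by
  have hS0 : μ (accumulate (reachesAvoiding X L b) 0) = 0 := by
    refine measure_mono_null (fun ω hω => ?_) (ae_iff.1 h0)
    rw [accumulate_zero_nat] at hω
    exact fun hx => hx₀ (hx ▸ hω.1)
  have hfC : ∀ x, ‖f x‖ ≤ 1 := fun x => (Real.norm_of_nonneg (hf0 x)).trans_le (hf1 x)
  calc hitPotential μ X L b f 0 ≤ ∫ ω, f (X 0 ω) ∂μ + 0 :=
        add_le_add (setIntegral_le_integral (integrable_comp_of_norm_le hX hfC)
          (ae_of_all _ fun _ => hf0 _)) (by rw [measureReal_def, hS0, ENNReal.toReal_zero])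
    _ = f x₀ := by
        rw [add_zero, integral_congr_ae (h0.mono fun ω hω => congrArg f hω), integral_const,
          probReal_univ, one_smul]

lemma hitPotential_succ_le [IsFiniteMeasure μ] {F : Filtration ℕ m0}
    (hadapted : ∀ n, Measurable[F n] (X n)) {c : ℝ} (hf_mono : Monotone f)
    (hf0 : ∀ x, 0 ≤ f x) (hf1 : ∀ x, f x ≤ 1) (hfb : f b = 1)
    (hsuper : ∀ x ∈ Ioo L b, c * f (x + 1) + (1 - c) * f (x - 1) ≤ f x) {n : ℕ}
    (hinside : ∀ᵐ ω ∂μ, ω ∈ avoids X L b n → X n ω ∈ Ioo L b)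
    (hstep : ∀ᵐ ω ∂μ, X n ω ∈ Ioo L b → X (n + 1) ω = X n ω + 1 ∨ X (n + 1) ω + 1 = X n ω)
    (hdrift : ∀ᵐ ω ∂μ, X n ω ∈ Ioo L b →
      (μ[Set.indicator {ω' | X (n + 1) ω' = X n ω' + 1} (fun _ => (1 : ℝ)) | F n]) ω ≤ c) :
    hitPotential μ X L b f (n + 1) ≤ hitPotential μ X L b f n := by
  have hX : ∀ n, Measurable (X n) := fun n => (hadapted n).mono (F.le n) le_rfl
  have hfC : ∀ x, ‖f x‖ ≤ 1 := fun x => (Real.norm_of_nonneg (hf0 x)).trans_le (hf1 x)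
  have hA : MeasurableSet[F n] (avoids X L b n) :=
    measurableSet_avoids fun k hk => (hadapted k).mono (F.mono hk) le_rfl
  calc hitPotential μ X L b f (n + 1)
      ≤ ∫ ω in avoids X L b n, f (X (n + 1) ω) ∂μ +
          μ.real (accumulate (reachesAvoiding X L b) n) :=
        setIntegral_avoids_succ_add_measureReal_le hX (integrable_comp_of_norm_le (hX _) hfC)
          (fun _ => hf0 _) fun _ hb => hb ▸ hfb.ge
    _ ≤ ∫ ω in avoids X L b n, (c * f (X n ω + 1) + (1 - c) * f (X n ω - 1)) ∂μ +
          μ.real (accumulate (reachesAvoiding X L b) n) := by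
        gcongr ?_ + _
        refine setIntegral_comp_succ_le hadapted hA hf_mono hfC ?_ ?_
        · filter_upwards [hinside, hstep] with ω hω hωstep hωA using hωstep (hω hωA)
        · filter_upwards [hinside, hdrift] with ω hω hωdrift hωA using hωdrift (hω hωA)
    _ ≤ hitPotential μ X L b f n := by
        refine add_le_add_left (setIntegral_mono_on_ae ?_
          (integrable_comp_of_norm_le (hX n) hfC).integrableOn (F.le n _ hA) ?_) _
        · exact (((integrable_comp_of_norm_le ((hX n).add_const 1) hfC).const_mul c).add
            ((integrable_comp_of_norm_le ((hX n).sub_const 1) hfC).const_mul (1 - c))).integrableOn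
        · filter_upwards [hinside] with ω hω hωA using hsuper _ (hω hωA)

end Potential

theorem measure_hitTime_lt_hitTime_le {Ω : Type*} {m0 : MeasurableSpace Ω} {μ : Measure Ω}
    [IsProbabilityMeasure μ] {F : Filtration ℕ m0} {X : ℕ → Ω → ℕ}
    (hadapted : ∀ n, Measurable[F n] (X n)) {L b x₀ : ℕ} (hx₀ : x₀ ∈ Ioo L b)
    (h0 : ∀ᵐ ω ∂μ, X 0 ω = x₀)
    (hstep : ∀ᵐ ω ∂μ, ∀ n, X n ω ∈ Ioo L b → X (n + 1) ω = X n ω + 1 ∨ X (n + 1) ω + 1 = X n ω)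
    {c : ℝ} (hdrift : ∀ n, ∀ᵐ ω ∂μ, X n ω ∈ Ioo L b →
      (μ[Set.indicator {ω' | X (n + 1) ω' = X n ω' + 1} (fun _ => (1 : ℝ)) | F n]) ω ≤ c)
    {f : ℕ → ℝ} (hf_mono : Monotone f) (hf0 : ∀ x, 0 ≤ f x) (hf1 : ∀ x, f x ≤ 1) (hfb : f b = 1)
    (hsuper : ∀ x ∈ Ioo L b, c * f (x + 1) + (1 - c) * f (x - 1) ≤ f x) :
    μ {ω | hitTime X b ω < hitTime X L ω} ≤ ENNReal.ofReal (f x₀) := by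
  have hinside : ∀ᵐ ω ∂μ, ∀ n, ω ∈ avoids X L b n → X n ω ∈ Ioo L b := by
    filter_upwards [h0, hstep] with ω hω0 hωstep n hn
    exact mem_Ioo_of_forall_ne (hω0 ▸ hx₀) hωstep n hn
  have hanti : Antitone (hitPotential μ X L b f) := antitone_nat_of_succ_le fun n =>
    hitPotential_succ_le hadapted hf_mono hf0 hf1 hfb hsuper (hinside.mono fun _ h => h n)
      (hstep.mono fun _ h => h n) (hdrift n)
  have hS : ∀ n, μ.real (accumulate (reachesAvoiding X L b) n) ≤ f x₀ := fun n =>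
    (measureReal_accumulate_le_hitPotential hf0 n).trans ((hanti (Nat.zero_le n)).trans
      (hitPotential_zero_le ((hadapted 0).mono (F.le 0) le_rfl) hx₀.2.ne h0 hf0 hf1))
  rw [setOf_hitTime_lt_hitTime, measure_iUnion_eq_iSup_accumulate]
  refine iSup_le fun n => ?_
  rw [← ofReal_measureReal]
  exact ENNReal.ofReal_le_ofReal (hS n)

lemma mul_pow_add_one_sub_mul_pow_add_two {c : ℝ} (hc : c ≠ 1) (k : ℕ) :
    c * (c / (1 - c)) ^ k + (1 - c) * (c / (1 - c)) ^ (k + 2) = (c / (1 - c)) ^ (k + 1) := by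
  have h : (1 - c) * (c / (1 - c)) = c := mul_div_cancel₀ c (sub_ne_zero.2 hc.symm)
  linear_combination ((c / (1 - c)) ^ k * (c / (1 - c) - 1)) * h

theorem stmt7 {Ω : Type*} {m0 : MeasurableSpace Ω} (μ : Measure Ω) [IsProbabilityMeasure μ]
    (F : Filtration ℕ m0) (X : ℕ → Ω → ℕ)
    (ε : ℝ) (hε0 : 0 < ε) (hε : ε < 1 / 2)
    (M N : ℕ) (hM : 1 ≤ M) (hMN : M < N)
    (hadapted : ∀ n : ℕ, Measurable[F n] (X n))
    (h0 : ∀ᵐ ω ∂μ, X 0 ω = M)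
    (hstep : ∀ᵐ ω ∂μ, ∀ n : ℕ,
      (1 ≤ X n ω → X (n + 1) ω = X n ω + 1 ∨ X (n + 1) ω + 1 = X n ω) ∧
      (X n ω = 0 → X (n + 1) ω = X n ω + 1))
    (hdrift : ∀ n : ℕ, ∀ᵐ ω ∂μ, M ≤ X n ω →
      (μ[Set.indicator {ω' | X (n + 1) ω' = X n ω' + 1} (fun _ => (1 : ℝ)) | F n]) ω
        ≤ 1 / 2 - ε) :
    μ {ω | hitTime X N ω < hitTime X (M - 1) ω} ≤
      ENNReal.ofReal ((1 - 2 * ε) ^ (N - M)) := by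
  set c : ℝ := 1 / 2 - ε with hc
  set r : ℝ := c / (1 - c)
  have hr0 : 0 ≤ r := div_nonneg (by linarith) (by linarith)
  have hr : r ≤ 1 - 2 * ε := by
    rw [div_le_iff₀ (by linarith), hc]
    nlinarith
  have hr1 : r ≤ 1 := by linarith
  have hbound := measure_hitTime_lt_hitTime_le (f := fun x => r ^ (N - x)) (c := c) (L := M - 1)
    (b := N) hadapted (by simp only [mem_Ioo]; omega) h0
    (by filter_upwards [hstep] with ω hω n hn using (hω n).1 (by have := hn.1; omega))
    (fun n => (hdrift n).mono fun ω hω hn => hω (by have := hn.1; omega))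
    (fun x y hxy => pow_le_pow_of_le_one hr0 hr1 (by omega)) (fun _ => pow_nonneg hr0 _)
    (fun _ => pow_le_one₀ hr0 hr1) (by simp)
    (fun x hx => by
      obtain ⟨hxL, hxN⟩ := hx
      rw [show N - (x - 1) = N - (x + 1) + 2 by omega, show N - x = N - (x + 1) + 1 by omega]
      exact (mul_pow_add_one_sub_mul_pow_add_two (by linarith) _).le)
  exact hbound.trans (ENNReal.ofReal_le_ofReal (pow_le_pow_left₀ hr0 hr _))
end

section
/- Let d, m, C, z be real numbers with 0 < d < m, C ≥ 1, and 0 < z ≤ C·log(2)·m/d. Then (1 − (1 − d/m)^z)/z ≥ d/(2·C·log(2)·m). -/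
/-
With a = d/m and L = C log 2, put t = z a ∈ (0, L]. Since 1 - a ≤ e^{-a}, we have
(1 - a)^z ≤ e^{-t}. On [0, L] the convex function e^{-t} lies below its chord, and
e^{-L} ≤ 1/2 because L ≥ log 2, so e^{-t} ≤ 1 - (t/L)(1 - e^{-L}) ≤ 1 - t/(2L).
Hence 1 - (1 - a)^z ≥ z a/(2L); dividing by z gives the claim.
-/

open Real

lemma one_sub_rpow_le_exp_neg_mul {a z : ℝ} (ha : a ≤ 1) (hz : 0 ≤ z) :
    (1 - a) ^ z ≤ exp (-(z * a)) :=
  calc (1 - a) ^ z ≤ exp (-a) ^ z := rpow_le_rpow (by linarith) (one_sub_le_exp_neg a) hz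
    _ = exp (-(z * a)) := by rw [← exp_mul]; ring_nf

lemma exp_neg_le_chord {t L : ℝ} (ht : 0 ≤ t) (htL : t ≤ L) (hL : 0 < L) :
    exp (-t) ≤ 1 - t / L * (1 - exp (-L)) := by
  have hw : 0 ≤ 1 - t / L := by rw [sub_nonneg, div_le_one hL]; exact htL
  have := convexOn_exp.2 (Set.mem_univ 0) (Set.mem_univ (-L)) hw (by positivity)
    (sub_add_cancel 1 (t / L))
  have harg : (1 - t / L) • (0 : ℝ) + (t / L) • (-L) = -t := by
    simp only [smul_eq_mul]; field_simp; ring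
  rw [harg, smul_eq_mul, smul_eq_mul, exp_zero] at this
  linarith

lemma exp_neg_le_one_sub_div_two_mul {t L : ℝ} (ht : 0 ≤ t) (htL : t ≤ L)
    (hL : log 2 ≤ L) : exp (-t) ≤ 1 - t / (2 * L) := by
  have hL0 : 0 < L := (log_pos one_lt_two).trans_le hL
  have hexpL : exp (-L) ≤ 1 / 2 :=
    calc exp (-L) ≤ exp (-log 2) := exp_le_exp.2 (neg_le_neg hL)
      _ = 1 / 2 := by rw [exp_neg, exp_log two_pos, one_div]
  calc exp (-t) ≤ 1 - t / L * (1 - exp (-L)) := exp_neg_le_chord ht htL hL0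
    _ ≤ 1 - t / L * (1 / 2) := by gcongr; linarith
    _ = 1 - t / (2 * L) := by ring

theorem stmt9 (d m C z : ℝ) (hd : 0 < d) (hdm : d < m) (hC : 1 ≤ C)
    (hz0 : 0 < z) (hz : z ≤ C * Real.log 2 * m / d) :
    (1 - (1 - d / m) ^ z) / z ≥ d / (2 * C * Real.log 2 * m) := by
  have hm : 0 < m := hd.trans hdm
  have hL : log 2 ≤ C * log 2 := le_mul_of_one_le_left (log_pos one_lt_two).le hC
  have htL : z * (d / m) ≤ C * log 2 := by
    calc z * (d / m) ≤ C * log 2 * m / d * (d / m) := by gcongr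
      _ = C * log 2 := by field_simp
  have hbound : z * (d / m) / (2 * (C * log 2)) ≤ 1 - (1 - d / m) ^ z := by
    have h1 := one_sub_rpow_le_exp_neg_mul ((div_lt_one hm).2 hdm).le hz0.le
    have h2 := exp_neg_le_one_sub_div_two_mul (by positivity) htL hL
    linarith
  calc d / (2 * C * log 2 * m) = z * (d / m) / (2 * (C * log 2)) / z := by
        field_simp
    _ ≤ (1 - (1 - d / m) ^ z) / z := by gcongr
end

section
/- Let k1, n, l be natural numbers, set N = k1 + n, and let m be a positive real number. Assume 5·k1 ≤ 2·N, l ≤ N, l ≥ m/8, and N + 1 ≤ 2·m. Then ∑_{j : 0 ≤ j ≤ l, 2j ≥ l} C(k1, j)·C(n, l−j)/C(N, l) ≤ 2·m·0.98^{m/8}. (The left-hand side is the probability that at least half of the balls drawn are red when l balls are drawn uniformly at random without replacement from an urn containing k1 red and n blue balls.) -/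
open Real Finset

lemma hyp_prod_pair (f : ℕ → ℝ) (s : ℕ) :
    ∏ i ∈ range (2*s), f i = ∏ i ∈ range s, (f (2*i) * f (2*i+1)) := by
  induction s with
  | zero => simp
  | succ s ih =>
      have h : 2*(s+1) = 2*s + 1 + 1 := by ring
      rw [h, prod_range_succ, prod_range_succ, prod_range_succ, ih, mul_assoc]

lemma lemC0 (s : ℕ) :
    (Nat.centralBinom s : ℝ) * ∏ i ∈ range s, (2*(i:ℝ)+2) =
      4^s * ∏ i ∈ range s, (2*(i:ℝ)+1) := by
  induction s with
  | zero => simp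
  | succ s ih =>
      have key := Nat.succ_mul_centralBinom_succ s
      have keyR : ((s:ℝ)+1) * (Nat.centralBinom (s+1) : ℝ)
          = 2 * (2*(s:ℝ)+1) * (Nat.centralBinom s : ℝ) := by
        exact_mod_cast congrArg (fun x : ℕ => (x : ℝ)) key
      rw [prod_range_succ, prod_range_succ]
      have hs1 : ((s:ℝ)+1) ≠ 0 := by positivity
      apply mul_left_cancel₀ hs1
      push_cast
      linear_combination ((∏ i ∈ range s, (2*(i:ℝ)+2)) * (2*(s:ℝ)+2)) * keyR
        + (2*(2*(s:ℝ)+1)*(2*(s:ℝ)+2)) * ih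

lemma lemC (d s : ℕ) :
    (((2*s+d).choose (s+d) : ℕ) : ℝ) * ∏ i ∈ range s, (2*(i:ℝ)+(d:ℝ)+2) ≤
      2^(2*s+d) * ∏ i ∈ range s, (2*(i:ℝ)+(d:ℝ)+1) := by
  induction d with
  | zero =>
      have h := lemC0 s
      rw [Nat.centralBinom] at h
      simp only [Nat.add_zero, Nat.cast_zero, add_zero]
      apply le_of_eq
      rw [h, pow_mul]; norm_num
  | succ d ih =>
      have e1 : 2*s+(d+1) = (2*s+d)+1 := by ring
      have e2 : s+(d+1) = (s+d)+1 := by ring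
      rw [e1, e2]
      have hchoose : (((2*s+d:ℕ):ℝ)+1)*(((2*s+d).choose (s+d) : ℕ):ℝ)
          = ((((2*s+d)+1).choose ((s+d)+1) : ℕ):ℝ) * (((s+d:ℕ):ℝ)+1) := by
        have h2 := Nat.add_one_mul_choose_eq (2*s+d) (s+d)
        have h3 := congrArg (fun x : ℕ => (x : ℝ)) h2
        push_cast [Nat.succ_eq_add_one] at h3
        push_cast
        linarith [h3]
      set P1 := ∏ i ∈ range s, (2*(i:ℝ)+(d:ℝ)+1) with hP1
      set P2 := ∏ i ∈ range s, (2*(i:ℝ)+(d:ℝ)+2) with hP2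
      have hP3 : ∏ i ∈ range s, (2*(i:ℝ)+((d:ℝ)+1)+2)
          = ∏ i ∈ range s, (2*(i:ℝ)+(d:ℝ)+3) := by
        apply prod_congr rfl; intro i _; ring
      have hP2' : ∏ i ∈ range s, (2*(i:ℝ)+((d:ℝ)+1)+1)
          = P2 := by
        rw [hP2]; apply prod_congr rfl; intro i _; ring
      push_cast
      rw [hP3, hP2']
      set P3 := ∏ i ∈ range s, (2*(i:ℝ)+(d:ℝ)+3) with hP3'
      have hp1 : (0:ℝ) < P1 := by
        rw [hP1]; apply prod_pos; intro i _; positivity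
      have hp2 : (0:ℝ) ≤ P2 := by
        rw [hP2]; apply prod_nonneg; intro i _; positivity
      have hAC : P3 * P1 ≤ P2 * P2 := by
        rw [hP1, hP2, hP3', ← prod_mul_distrib, ← prod_mul_distrib]
        apply prod_le_prod
        · intro i _; positivity
        · intro i _; nlinarith [sq_nonneg (1:ℝ)]
      set X := ((((2*s+d)+1).choose ((s+d)+1) : ℕ):ℝ) with hX
      set C0 := (((2*s+d).choose (s+d) : ℕ):ℝ) with hC0
      have hXpos : (0:ℝ) ≤ ((2*s+d:ℕ):ℝ) + 1 := by positivity
      have hpos : (0:ℝ) < (((s+d:ℕ):ℝ)+1) * P1 := by positivity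
      have key : X*P3*((((s+d:ℕ):ℝ)+1)*P1) ≤ 2^((2*s+d)+1)*P2*((((s+d:ℕ):ℝ)+1)*P1) := by
        calc X*P3*((((s+d:ℕ):ℝ)+1)*P1)
            = (X*(((s+d:ℕ):ℝ)+1))*(P3*P1) := by ring
          _ = ((((2*s+d:ℕ):ℝ)+1)*C0)*(P3*P1) := by rw [← hchoose]
          _ ≤ ((((2*s+d:ℕ):ℝ)+1)*C0)*(P2*P2) := by
              apply mul_le_mul_of_nonneg_left hAC
              have : (0:ℝ) ≤ C0 := by rw [hC0]; positivity
              positivity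
          _ = ((((2*s+d:ℕ):ℝ)+1)*P2*(C0*P2)) := by ring
          _ ≤ ((((2*s+d:ℕ)):ℝ)+1)*P2*(2^(2*s+d)*P1) := by
              apply mul_le_mul_of_nonneg_left ih
              positivity
          _ ≤ (2*((((s+d:ℕ)):ℝ)+1))*P2*(2^(2*s+d)*P1) := by
              apply mul_le_mul_of_nonneg_right
              · apply mul_le_mul_of_nonneg_right _ hp2
                push_cast; linarith
              · positivity
          _ = 2^((2*s+d)+1)*P2*((((s+d:ℕ):ℝ)+1)*P1) := by ring
      exact le_of_mul_le_mul_right key hpos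

lemma cast_prod_sub (a k : ℕ) (h : k ≤ a) :
    ((a.descFactorial k : ℕ):ℝ) = ∏ i ∈ range k, ((a:ℝ) - i) := by
  rw [Nat.descFactorial_eq_prod_range, Nat.cast_prod]
  apply prod_congr rfl; intro i hi
  rw [Nat.cast_sub (le_of_lt (lt_of_lt_of_le (mem_range.mp hi) h))]

set_option maxHeartbeats 1000000 in
lemma term_le (k1 n l j : ℕ) (hbal : 5*k1 ≤ 2*(k1+n)) (hl : l ≤ k1+n)
    (hjl : j ≤ l) (h2j : l ≤ 2*j) :
    (k1.choose j : ℝ) * (n.choose (l-j) : ℝ) ≤ (0.98:ℝ)^l * ((k1+n).choose l : ℝ) := by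
  set N := k1 + n with hN
  set s := l - j with hs
  set d := j - s with hd
  have hj : j = s + d := by omega
  have hl2 : l = 2*s + d := by omega
  have hsj : s ≤ j := by omega
  -- degenerate cases
  by_cases hk : k1 < j
  · rw [Nat.choose_eq_zero_of_lt hk]
    have : (0:ℝ) ≤ (0.98:ℝ)^l * ((N).choose l : ℝ) := by positivity
    simpa using this
  by_cases hn : n < s
  · rw [Nat.choose_eq_zero_of_lt hn]
    have : (0:ℝ) ≤ (0.98:ℝ)^l * ((N).choose l : ℝ) := by positivity
    simpa using this
  push_neg at hk hn
  -- real product abbreviations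
  set a1 : ℝ := ∏ i ∈ range s, ((k1:ℝ) - i) with ha1
  set a2 : ℝ := ∏ r ∈ range d, ((k1:ℝ) - s - r) with ha2
  set b : ℝ := ∏ i ∈ range s, ((n:ℝ) - i) with hb
  set cA : ℝ := ∏ i ∈ range s, ((N:ℝ) - 2*i) with hcA
  set cB : ℝ := ∏ i ∈ range s, ((N:ℝ) - 2*i - 1) with hcB
  set cD : ℝ := ∏ r ∈ range d, ((N:ℝ) - 2*s - r) with hcD
  have hcast : ∀ x : ℕ, x ≤ N → ((x:ℝ) ≤ (N:ℝ)) := fun x hx => by exact_mod_cast hx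
  have hbalR : 5*(k1:ℝ) ≤ 2*(N:ℝ) := by exact_mod_cast hbal
  have hlR : (l:ℝ) ≤ (N:ℝ) := by exact_mod_cast hl
  -- nonnegativity of factors
  have ha1n : 0 ≤ a1 := by
    apply prod_nonneg; intro i hi
    have h1 := mem_range.mp hi
    have : (i:ℝ) ≤ (k1:ℝ) := by exact_mod_cast le_of_lt (lt_of_lt_of_le h1 (le_trans hsj hk))
    linarith
  have hbn : 0 ≤ b := by
    apply prod_nonneg; intro i hi
    have h1 := mem_range.mp hi
    have : (i:ℝ) ≤ (n:ℝ) := by exact_mod_cast le_of_lt (lt_of_lt_of_le h1 hn)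
    linarith
  have ha2n : 0 ≤ a2 := by
    apply prod_nonneg; intro r hr
    have h1 := mem_range.mp hr
    have h2 : s + r ≤ k1 := by omega
    have : (s:ℝ) + r ≤ (k1:ℝ) := by exact_mod_cast h2
    linarith
  have hcAn : 0 ≤ cA := by
    apply prod_nonneg; intro i hi
    have h1 := mem_range.mp hi
    have h2 : 2*i ≤ N := by omega
    have : 2*(i:ℝ) ≤ (N:ℝ) := by exact_mod_cast h2
    linarith
  have hcBn : 0 ≤ cB := by
    apply prod_nonneg; intro i hi
    have h1 := mem_range.mp hi
    have h2 : 2*i+1 ≤ N := by omega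
    have : 2*(i:ℝ)+1 ≤ (N:ℝ) := by exact_mod_cast h2
    linarith
  have hcDn : 0 ≤ cD := by
    apply prod_nonneg; intro r hr
    have h1 := mem_range.mp hr
    have h2 : 2*s + r ≤ N := by omega
    have : 2*(s:ℝ) + r ≤ (N:ℝ) := by exact_mod_cast h2
    linarith
  -- bound 1
  have bound1 : a1 * b ≤ (6/25:ℝ)^s * cA^2 := by
    calc a1 * b = ∏ i ∈ range s, (((k1:ℝ)-i)*((n:ℝ)-i)) := by
          rw [ha1, hb, prod_mul_distrib]
      _ ≤ ∏ i ∈ range s, ((6/25:ℝ)*((N:ℝ)-2*i)^2) := ?_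
      _ = (6/25:ℝ)^s * cA^2 := by
          rw [prod_mul_distrib, prod_const, card_range, hcA, prod_pow]
    apply prod_le_prod
    · intro i hi
      have h1 := mem_range.mp hi
      have h2 : (i:ℝ) ≤ (k1:ℝ) := by exact_mod_cast le_of_lt (lt_of_lt_of_le h1 (le_trans hsj hk))
      have h3 : (i:ℝ) ≤ (n:ℝ) := by exact_mod_cast le_of_lt (lt_of_lt_of_le h1 hn)
      have := mul_nonneg (by linarith : (0:ℝ) ≤ (k1:ℝ) - i) (by linarith : (0:ℝ) ≤ (n:ℝ) - i)
      linarith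
    · intro i hi
      have h1 := mem_range.mp hi
      have h2 : 2*i ≤ N := by omega
      have h2R : 2*(i:ℝ) ≤ (N:ℝ) := by exact_mod_cast h2
      have hD : (N:ℝ) - 2*i ≤ 5*((N:ℝ) - 2*k1) := by linarith
      have hDp : 0 ≤ (N:ℝ) - 2*k1 := by linarith
      have hNe : (N:ℝ) = (k1:ℝ) + (n:ℝ) := by push_cast [hN]; ring
      nlinarith [mul_nonneg (by linarith : (0:ℝ) ≤ 5*((N:ℝ)-2*k1) - ((N:ℝ)-2*i))
        (by linarith : (0:ℝ) ≤ 5*((N:ℝ)-2*k1) + ((N:ℝ)-2*i))]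
  -- bound 2
  have bound2 : a2 ≤ (2/5:ℝ)^d * cD := by
    calc a2 = ∏ r ∈ range d, ((k1:ℝ) - s - r) := ha2
      _ ≤ ∏ r ∈ range d, ((2/5:ℝ)*((N:ℝ)-2*s-r)) := ?_
      _ = (2/5:ℝ)^d * cD := by
          rw [prod_mul_distrib, prod_const, card_range, hcD]
    apply prod_le_prod
    · intro r hr
      have h1 := mem_range.mp hr
      have h2 : s + r ≤ k1 := by omega
      have : (s:ℝ) + r ≤ (k1:ℝ) := by exact_mod_cast h2
      linarith
    · intro r hr
      linarith
  -- bound 3 : (l.choose j) * cA ≤ 2^l * cB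
  have bound3 : ((l.choose j : ℕ):ℝ) * cA ≤ 2^l * cB := by
    have hlem := lemC d s
    -- convert products in hlem to (l - 2i) form
    have e1 : ∏ i ∈ range s, (2*(i:ℝ)+(d:ℝ)+2) = ∏ i ∈ range s, ((l:ℝ) - 2*i) := by
      rw [← prod_range_reflect]
      apply prod_congr rfl; intro i hi
      have h1 := mem_range.mp hi
      have h2 : s - 1 - i = s - (i+1) := by omega
      rw [h2, Nat.cast_sub (by omega : i+1 ≤ s)]
      have hlc : (l:ℝ) = 2*(s:ℝ) + d := by exact_mod_cast hl2
      push_cast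
      linarith
    have e2 : ∏ i ∈ range s, (2*(i:ℝ)+(d:ℝ)+1) = ∏ i ∈ range s, ((l:ℝ) - 2*i - 1) := by
      rw [← prod_range_reflect]
      apply prod_congr rfl; intro i hi
      have h1 := mem_range.mp hi
      have h2 : s - 1 - i = s - (i+1) := by omega
      rw [h2, Nat.cast_sub (by omega : i+1 ≤ s)]
      have hlc : (l:ℝ) = 2*(s:ℝ) + d := by exact_mod_cast hl2
      push_cast
      linarith
    rw [e1, e2, ← hl2] at hlem
    rw [show s + d = j from hj.symm] at hlem
    set aa : ℝ := ∏ i ∈ range s, ((l:ℝ) - 2*i) with haa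
    set bb : ℝ := ∏ i ∈ range s, ((l:ℝ) - 2*i - 1) with hbb
    have haap : 0 < aa := by
      rw [haa]; apply prod_pos; intro i hi
      have h1 := mem_range.mp hi
      have h2 : 2*i + 1 ≤ l := by omega
      have : 2*(i:ℝ) + 1 ≤ (l:ℝ) := by exact_mod_cast h2
      linarith
    have hbbp : 0 < bb := by
      rw [hbb]; apply prod_pos; intro i hi
      have h1 := mem_range.mp hi
      have h2 : 2*i + 2 ≤ l := by omega
      have : 2*(i:ℝ) + 2 ≤ (l:ℝ) := by exact_mod_cast h2
      linarith
    have hbridge : cA * bb ≤ aa * cB := by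
      rw [hcA, hcB, haa, hbb, ← prod_mul_distrib, ← prod_mul_distrib]
      apply prod_le_prod
      · intro i hi
        have h1 := mem_range.mp hi
        have h2 : 2*i ≤ N := by omega
        have h2R : 2*(i:ℝ) ≤ (N:ℝ) := by exact_mod_cast h2
        have h3 : 2*i + 2 ≤ l := by omega
        have h3R : 2*(i:ℝ) + 2 ≤ (l:ℝ) := by exact_mod_cast h3
        have := mul_nonneg (by linarith : (0:ℝ) ≤ (N:ℝ) - 2*i) (by linarith : (0:ℝ) ≤ (l:ℝ) - 2*i - 1)
        linarith
      · intro i hi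
        have h1 := mem_range.mp hi
        have h3 : 2*i + 2 ≤ l := by omega
        have h3R : 2*(i:ℝ) + 2 ≤ (l:ℝ) := by exact_mod_cast h3
        have hexp : ((l:ℝ)-2*i)*((N:ℝ)-2*i-1) - ((N:ℝ)-2*i)*((l:ℝ)-2*i-1)
            = (N:ℝ) - l := by ring
        nlinarith
    have hCn : (0:ℝ) ≤ ((l.choose j : ℕ):ℝ) := by positivity
    have key : ((l.choose j : ℕ):ℝ) * cA * (aa * bb) ≤ 2^l * cB * (aa * bb) := by
      calc ((l.choose j : ℕ):ℝ) * cA * (aa * bb)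
          = (((l.choose j : ℕ):ℝ) * aa) * (cA * bb) := by ring
        _ ≤ (2^l * bb) * (cA * bb) := by
            apply mul_le_mul_of_nonneg_right hlem
            exact mul_nonneg hcAn (le_of_lt hbbp)
        _ ≤ (2^l * bb) * (aa * cB) := by
            apply mul_le_mul_of_nonneg_left hbridge
            positivity
        _ = 2^l * cB * (aa * bb) := by ring
    exact le_of_mul_le_mul_right key (by positivity)
  -- assemble the descFactorial inequality
  have hpow : (2:ℝ)^l = 4^s * 2^d := by rw [hl2, pow_add, pow_mul]; norm_num
  have main : ((l.choose j : ℕ):ℝ) * ((a1*a2) * b) ≤ (0.98:ℝ)^l * ((cA*cB)*cD) := by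
    have hCn : (0:ℝ) ≤ ((l.choose j : ℕ):ℝ) := by positivity
    calc ((l.choose j : ℕ):ℝ) * ((a1*a2) * b)
        = (a1*b) * a2 * ((l.choose j : ℕ):ℝ) := by ring
      _ ≤ ((6/25:ℝ)^s * cA^2) * a2 * ((l.choose j : ℕ):ℝ) := by
          apply mul_le_mul_of_nonneg_right (mul_le_mul_of_nonneg_right bound1 ha2n) hCn
      _ ≤ ((6/25:ℝ)^s * cA^2) * ((2/5:ℝ)^d * cD) * ((l.choose j : ℕ):ℝ) := by
          apply mul_le_mul_of_nonneg_right (mul_le_mul_of_nonneg_left bound2 (by positivity)) hCn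
      _ = ((6/25:ℝ)^s * (2/5:ℝ)^d * cD * cA) * (((l.choose j : ℕ):ℝ) * cA) := by ring
      _ ≤ ((6/25:ℝ)^s * (2/5:ℝ)^d * cD * cA) * (2^l * cB) := by
          apply mul_le_mul_of_nonneg_left bound3
          have : (0:ℝ) ≤ (6/25:ℝ)^s * (2/5:ℝ)^d := by positivity
          exact mul_nonneg (mul_nonneg this hcDn) hcAn
      _ = (((6/25:ℝ)^s * 4^s) * ((2/5:ℝ)^d * 2^d)) * ((cA*cB)*cD) := by
          rw [hpow]; ring
      _ = ((24/25:ℝ)^s * (4/5:ℝ)^d) * ((cA*cB)*cD) := by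
          rw [← mul_pow, ← mul_pow]; norm_num
      _ ≤ ((0.98:ℝ)^(2*s) * (0.98:ℝ)^d) * ((cA*cB)*cD) := by
          apply mul_le_mul_of_nonneg_right _ (mul_nonneg (mul_nonneg hcAn hcBn) hcDn)
          apply mul_le_mul
          · rw [pow_mul]
            apply pow_le_pow_left₀ (by norm_num) (by norm_num)
          · apply pow_le_pow_left₀ (by norm_num) (by norm_num)
          · positivity
          · positivity
      _ = (0.98:ℝ)^l * ((cA*cB)*cD) := by rw [hl2, pow_add]
  -- cast identities
  have eq1 : ((k1.descFactorial j : ℕ):ℝ) = a1 * a2 := by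
    rw [cast_prod_sub k1 j hk, hj, prod_range_add, ha1, ha2]
    congr 1
    apply prod_congr rfl; intro r _
    push_cast; ring
  have eq2 : ((n.descFactorial s : ℕ):ℝ) = b := by
    rw [cast_prod_sub n s hn, hb]
  have eq3 : ((N.descFactorial l : ℕ):ℝ) = (cA*cB)*cD := by
    rw [hcA, hcB, hcD, ← prod_mul_distrib]
    rw [cast_prod_sub N l hl, hl2, prod_range_add, hyp_prod_pair (fun i => (N:ℝ) - i) s]
    congr 1
    · apply prod_congr rfl; intro i _
      push_cast; ring
    · apply prod_congr rfl; intro r _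
      push_cast; ring
  rw [← eq1, ← eq2, ← eq3] at main
  -- relate to choose via factorials
  have hf1 : ((k1.descFactorial j : ℕ):ℝ) = (j.factorial:ℝ) * (k1.choose j:ℝ) := by
    exact_mod_cast congrArg (fun x : ℕ => (x:ℝ)) (Nat.descFactorial_eq_factorial_mul_choose k1 j)
  have hf2 : ((n.descFactorial s : ℕ):ℝ) = (s.factorial:ℝ) * (n.choose s:ℝ) := by
    exact_mod_cast congrArg (fun x : ℕ => (x:ℝ)) (Nat.descFactorial_eq_factorial_mul_choose n s)
  have hf3 : ((N.descFactorial l : ℕ):ℝ) = (l.factorial:ℝ) * (N.choose l:ℝ) := by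
    exact_mod_cast congrArg (fun x : ℕ => (x:ℝ)) (Nat.descFactorial_eq_factorial_mul_choose N l)
  have hf4 : ((l.choose j:ℕ):ℝ) * (j.factorial:ℝ) * (s.factorial:ℝ) = (l.factorial:ℝ) := by
    have := Nat.choose_mul_factorial_mul_factorial hjl
    rw [← hs] at this
    exact_mod_cast congrArg (fun x : ℕ => (x:ℝ)) this
  rw [hf1, hf2, hf3] at main
  have hfacpos : (0:ℝ) < (l.factorial:ℝ) := by exact_mod_cast Nat.factorial_pos l
  have final : (k1.choose j : ℝ) * (n.choose s : ℝ) * (l.factorial:ℝ)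
      ≤ (0.98:ℝ)^l * ((N).choose l : ℝ) * (l.factorial:ℝ) := by
    calc (k1.choose j : ℝ) * (n.choose s : ℝ) * (l.factorial:ℝ)
        = (k1.choose j : ℝ) * (n.choose s : ℝ) * (((l.choose j:ℕ):ℝ) * (j.factorial:ℝ) * (s.factorial:ℝ)) := by rw [hf4]
      _ = ((l.choose j:ℕ):ℝ) * (((j.factorial:ℝ) * (k1.choose j:ℝ)) * ((s.factorial:ℝ) * (n.choose s:ℝ))) := by ring
      _ ≤ (0.98:ℝ)^l * ((l.factorial:ℝ) * (N.choose l:ℝ)) := main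
      _ = (0.98:ℝ)^l * ((N).choose l : ℝ) * (l.factorial:ℝ) := by ring
  exact le_of_mul_le_mul_right final hfacpos

theorem stmt11 (k1 n l : ℕ) (m : ℝ) (hm : 0 < m)
    (hbal : 5 * k1 ≤ 2 * (k1 + n)) (hl : l ≤ k1 + n)
    (hlm : m / 8 ≤ (l : ℝ)) (hNm : ((k1 + n : ℕ) : ℝ) + 1 ≤ 2 * m) :
    (∑ j ∈ Finset.range (l + 1), if l ≤ 2 * j then
        ((k1.choose j : ℝ) * (n.choose (l - j) : ℝ)) / ((k1 + n).choose l : ℝ) else 0)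
      ≤ 2 * m * (0.98 : ℝ) ^ (m / 8) := by
  have hNl : (0:ℝ) < (((k1+n).choose l : ℕ):ℝ) := by
    exact_mod_cast Nat.choose_pos hl
  have hterm : ∀ j ∈ Finset.range (l+1),
      (if l ≤ 2*j then ((k1.choose j : ℝ) * (n.choose (l-j) : ℝ)) / (((k1+n).choose l : ℕ):ℝ) else 0)
        ≤ (0.98:ℝ)^l := by
    intro j hj
    split_ifs with hc
    · rw [div_le_iff₀ hNl]
      exact term_le k1 n l j (by omega) hl (by have := Finset.mem_range.mp hj; omega) hc
    · positivity
  have hsum := Finset.sum_le_sum hterm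
  rw [Finset.sum_const, Finset.card_range, nsmul_eq_mul] at hsum
  push_cast at hsum
  have hlm2 : ((l:ℝ)+1) ≤ 2*m := by
    have : (l:ℝ) ≤ ((k1+n:ℕ):ℝ) := by exact_mod_cast hl
    linarith
  have hexp : (0.98:ℝ)^l ≤ (0.98:ℝ)^(m/8) := by
    rw [← Real.rpow_natCast (0.98:ℝ) l]
    exact Real.rpow_le_rpow_of_exponent_ge (by norm_num) (by norm_num) hlm
  calc (∑ j ∈ Finset.range (l + 1), if l ≤ 2 * j then
        ((k1.choose j : ℝ) * (n.choose (l - j) : ℝ)) / ((k1 + n).choose l : ℝ) else 0)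
      ≤ ((l:ℝ)+1) * (0.98:ℝ)^l := hsum
    _ ≤ (2*m) * (0.98:ℝ)^(m/8) := by
        apply mul_le_mul hlm2 hexp (by positivity) (by linarith)
    _ = 2 * m * (0.98:ℝ)^(m/8) := by ring
end

section
/- Let k1, n, h be natural numbers with 1 ≤ h ≤ k1, set N = k1 + n, and assume 5·k1 ≤ 2·N. Then ∏_{i=0}^{h−1} ((k1 − i)·(n − i))/(N − 2i)² ≤ 0.24^h. -/
theorem stmt12 (k1 n h : ℕ) (hh : 1 ≤ h) (hk : h ≤ k1)
    (hbal : 5 * k1 ≤ 2 * (k1 + n)) :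
    (∏ i ∈ Finset.range h,
        (((k1 : ℝ) - (i : ℝ)) * ((n : ℝ) - (i : ℝ))) / (((k1 : ℝ) + (n : ℝ)) - 2 * (i : ℝ)) ^ 2)
      ≤ (0.24 : ℝ) ^ h := by
  have hkn : 3 * k1 ≤ 2 * n := by omega
  calc (∏ i ∈ Finset.range h,
        (((k1 : ℝ) - (i : ℝ)) * ((n : ℝ) - (i : ℝ))) / (((k1 : ℝ) + (n : ℝ)) - 2 * (i : ℝ)) ^ 2)
      ≤ ∏ _i ∈ Finset.range h, (0.24 : ℝ) := by
        apply Finset.prod_le_prod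
        · intro i hi
          have hi' : i < h := Finset.mem_range.mp hi
          have hik : i < k1 := lt_of_lt_of_le hi' hk
          have hin : i < n := by omega
          have ha : (0:ℝ) < (k1:ℝ) - i := by
            have := (Nat.cast_lt (α := ℝ)).mpr hik; linarith
          have hb : (0:ℝ) < (n:ℝ) - i := by
            have := (Nat.cast_lt (α := ℝ)).mpr hin; linarith
          exact div_nonneg (by positivity) (sq_nonneg _)
        · intro i hi
          have hi' : i < h := Finset.mem_range.mp hi
          have hik : i < k1 := lt_of_lt_of_le hi' hk
          have hin : i < n := by omega
          have ha : (0:ℝ) < (k1:ℝ) - i := by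
            have := (Nat.cast_lt (α := ℝ)).mpr hik; linarith
          have hb : (0:ℝ) < (n:ℝ) - i := by
            have := (Nat.cast_lt (α := ℝ)).mpr hin; linarith
          have h3 : 3 * ((k1:ℝ) - i) ≤ 2 * ((n:ℝ) - i) := by
            have hc : 3 * k1 ≤ 2 * n + i := by omega
            have := (Nat.cast_le (α := ℝ)).mpr hc
            push_cast at this; linarith
          have hd : (0:ℝ) < ((k1:ℝ) + (n:ℝ) - 2 * i) := by linarith
          rw [div_le_iff₀ (by positivity)]
          nlinarith [mul_nonneg (by linarith : (0:ℝ) ≤ 3*((n:ℝ)-i) - 2*((k1:ℝ)-i))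
            (by linarith : (0:ℝ) ≤ 2*((n:ℝ)-i) - 3*((k1:ℝ)-i))]
    _ = (0.24 : ℝ) ^ h := by simp
end
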